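/- arXiv:2510.00850 — 2 statements merged into one kernel-verified Lean document; each statement's English description precedes it below -/
import Mathlib

section
/- Let δ, δ' ∈ Δ both satisfy all four of properties (P1), (P2), (P3), (P4). If δ'(L+1) = δ(L+1) and δ'(2) < δ(2), then δ' does not dominate δ. -/
open Finset

/-- The maximum revenue `r̄` among the positions `1, …, L+1`. -/
noncomputable def rbar (L : ℕ) (ρ : ℕ → ℝ) : ℝ :=
  (Finset.Icc 1 (L + 1)).sup' (Finset.nonempty_Icc.mpr (by omega)) ρ

/-- Membership in `Δ = {δ ∈ ℝ^{L+1} : 0 ≤ δ 1 ≤ ⋯ ≤ δ (L+1) ≤ r̄}`. -/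
def memDelta (L : ℕ) (ρ δ : ℕ → ℝ) : Prop :=
  0 ≤ δ 1 ∧ (∀ ℓ, 1 ≤ ℓ → ℓ ≤ L → δ ℓ ≤ δ (ℓ + 1)) ∧ δ (L + 1) ≤ rbar L ρ

/-- Membership in `W = {w ∈ ℝ^{N+1} : 0 ≤ w ℓ ≤ 1 for all ℓ, w (L+1) = 1}`. -/
def memW (N L : ℕ) (w : ℕ → ℝ) : Prop :=
  (∀ ℓ, 1 ≤ ℓ → ℓ ≤ N + 1 → 0 ≤ w ℓ ∧ w ℓ ≤ 1) ∧ w (L + 1) = 1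

/-- The objective `J(w, δ)`. -/
noncomputable def Jfun (L : ℕ) (ρ w δ : ℕ → ℝ) : ℝ :=
  δ (L + 1) + ∑ ℓ ∈ Finset.Icc 1 L, (max 0 (ρ ℓ - δ ℓ) - (δ (ℓ + 1) - δ ℓ)) * w ℓ

/-- `δ'` dominates `δ` (both thought of as elements of `Δ`). -/
def dominatesDelta (N L : ℕ) (ρ δ' δ : ℕ → ℝ) : Prop :=
  (∀ w, memW N L w → Jfun L ρ w δ' ≤ Jfun L ρ w δ) ∧
  ∃ w, memW N L w ∧ Jfun L ρ w δ' < Jfun L ρ w δ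

/-- `δ` is a Pareto cut in `Δ`. -/
def paretoDelta (N L : ℕ) (ρ δ : ℕ → ℝ) : Prop :=
  ¬ ∃ δ', memDelta L ρ δ' ∧ dominatesDelta N L ρ δ' δ

/-- `T(δ) = max {ℓ ∈ {1,…,L+1} : δ ℓ ≤ ρ ℓ}`. -/
noncomputable def Tof (L : ℕ) (ρ δ : ℕ → ℝ) : ℕ :=
  sSup {ℓ : ℕ | 1 ≤ ℓ ∧ ℓ ≤ L + 1 ∧ δ ℓ ≤ ρ ℓ}

/-- Property (P1). -/
def P1 (L : ℕ) (ρ δ : ℕ → ℝ) : Prop := 1 < Tof L ρ δ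

/-- Property (P2). -/
def P2 (ρ δ : ℕ → ℝ) : Prop := δ 1 ≤ ρ 1

/-- Property (P3). -/
def P3 (L : ℕ) (ρ δ : ℕ → ℝ) : Prop :=
  ∀ ℓ, 2 ≤ ℓ → ℓ ≤ L → δ ℓ < ρ ℓ → δ ℓ = δ (ℓ + 1)

/-- Property (P4). -/
def P4 (L : ℕ) (ρ δ : ℕ → ℝ) : Prop :=
  ∀ ℓ, Tof L ρ δ ≤ ℓ → ℓ ≤ L + 1 → δ ℓ = δ (Tof L ρ δ)

/-!
Test against the weight `w = e₁ + e_{L+1}`. Whenever `d 1 ≤ ρ 1` the sum in `J(w, d)` reduces to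
its first term, the telescoping part cancels `d 1`, and `J(w, d) = d (L+1) + ρ 1 - d 2`. So with the
last entry fixed, lowering `d 2` strictly raises `J` at this `w`, which rules out domination.
-/

def firstAndLastWeight (L : ℕ) (ℓ : ℕ) : ℝ :=
  if ℓ = 1 ∨ ℓ = L + 1 then 1 else 0

lemma memW_firstAndLastWeight (N L : ℕ) : memW N L (firstAndLastWeight L) := by
  refine ⟨fun ℓ _ _ => ?_, by simp [firstAndLastWeight]⟩
  unfold firstAndLastWeight
  split_ifs <;> norm_num

lemma Jfun_firstAndLastWeight {L : ℕ} (hL : 1 ≤ L) {ρ d : ℕ → ℝ} (hd : d 1 ≤ ρ 1) :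
    Jfun L ρ (firstAndLastWeight L) d = d (L + 1) + ρ 1 - d 2 := by
  have hsum : ∑ ℓ ∈ Icc 1 L, (max 0 (ρ ℓ - d ℓ) - (d (ℓ + 1) - d ℓ)) * firstAndLastWeight L ℓ
      = max 0 (ρ 1 - d 1) - (d 2 - d 1) := by
    rw [sum_eq_single_of_mem 1 (mem_Icc.mpr ⟨le_rfl, hL⟩)]
    · simp [firstAndLastWeight]
    · intro ℓ hℓ hℓ1
      have : ¬(ℓ = 1 ∨ ℓ = L + 1) := by grind
      simp [firstAndLastWeight, this]
  rw [Jfun, hsum, max_eq_right (by linarith)]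
  ring

lemma not_dominatesDelta_of_lt_two {N L : ℕ} (hL : 1 ≤ L) {ρ δ δ' : ℕ → ℝ}
    (hδ : δ 1 ≤ ρ 1) (hδ' : δ' 1 ≤ ρ 1) (heq : δ' (L + 1) = δ (L + 1)) (hlt : δ' 2 < δ 2) :
    ¬ dominatesDelta N L ρ δ' δ := by
  rintro ⟨hle, -⟩
  have := hle _ (memW_firstAndLastWeight N L)
  rw [Jfun_firstAndLastWeight hL hδ, Jfun_firstAndLastWeight hL hδ', heq] at this
  linarith

theorem stmt15_general
    (N L : ℕ) (hL1 : 1 ≤ L)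
    (ρ : ℕ → ℝ)
    (δ δ' : ℕ → ℝ)
    (hP : P1 L ρ δ ∧ P2 ρ δ ∧ P3 L ρ δ ∧ P4 L ρ δ)
    (hP' : P1 L ρ δ' ∧ P2 ρ δ' ∧ P3 L ρ δ' ∧ P4 L ρ δ')
    (heq : δ' (L + 1) = δ (L + 1)) (hlt : δ' 2 < δ 2) :
    ¬ dominatesDelta N L ρ δ' δ :=
  not_dominatesDelta_of_lt_two hL1 hP.2.1 hP'.2.1 heq hlt

theorem stmt15
    (N L : ℕ) (hL1 : 1 ≤ L) (hLN : L ≤ N)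
    (ρ : ℕ → ℝ)
    (hρpos : ∀ ℓ, 1 ≤ ℓ → ℓ ≤ N + 1 → ℓ ≠ L + 1 → 0 < ρ ℓ)
    (hρ0 : ρ (L + 1) = 0)
    (δ δ' : ℕ → ℝ) (hδ : memDelta L ρ δ) (hδ' : memDelta L ρ δ')
    (hP : P1 L ρ δ ∧ P2 ρ δ ∧ P3 L ρ δ ∧ P4 L ρ δ)
    (hP' : P1 L ρ δ' ∧ P2 ρ δ' ∧ P3 L ρ δ' ∧ P4 L ρ δ')
    (heq : δ' (L + 1) = δ (L + 1)) (hlt : δ' 2 < δ 2) :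
    ¬ dominatesDelta N L ρ δ' δ :=
  stmt15_general N L hL1 ρ δ δ' hP hP' heq hlt
end

section
/- Let δ ∈ Δ and let r̄' := max{ρ(ℓ) : 1 ≤ ℓ ≤ L+1 and ρ(ℓ) < r̄} (this set is nonempty since ρ(L+1) = 0 < r̄). Define δ' ∈ ℝ^{L+1} as follows: δ' := δ if T(δ) > 1, and δ'(ℓ) := min{δ(ℓ), r̄'} for every ℓ ∈ {1,...,L+1} if T(δ) = 1. Then δ' ∈ Δ, δ' satisfies property (P1), and if δ' ≠ δ then δ' dominates δ. -/
open Finset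

/-!
If `T(δ) > 1` there is nothing to prove. If `T(δ) = 1`, then `ρ 1 = r̄` and `ρ ℓ < δ ℓ` for
`ℓ ≥ 2`; hence `ρ ℓ ≤ r̄'` for `ℓ ≥ 2`, the truncation `δ' = min δ r̄'` still lies above `ρ`
beyond position 1, and the position attaining `r̄'` now counts towards `T(δ')`.
Since `max 0 (ρ - δ) + δ = max ρ δ`, the difference `J(w, δ) - J(w, δ')` equals
`F (L+1) - Σ (F (ℓ+1) - F ℓ) w ℓ`, where `F ℓ = max (ρ ℓ) (δ ℓ) - max (ρ ℓ) (δ' ℓ)` is the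
truncation loss `δ ℓ - δ' ℓ` for `ℓ ≥ 2` and vanishes at `ℓ = 1`. As `F` is nondecreasing and
`w ≤ 1`, this is at least `F 1 = 0`; for `w` supported at `L + 1` it is
`δ (L+1) - δ' (L+1)`, which is positive as soon as the truncation changes anything.
-/

lemma monotoneOn_Icc_of_le_succ {α : Type*} [Preorder α] {f : ℕ → α} {L : ℕ}
    (h : ∀ ℓ, 1 ≤ ℓ → ℓ ≤ L → f ℓ ≤ f (ℓ + 1)) : MonotoneOn f (Set.Icc 1 (L + 1)) :=
  monotoneOn_of_le_add_one Set.ordConnected_Icc fun a _ ha ha1 =>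
    h a ha.1 (by simp only [Set.mem_Icc] at ha1; omega)

lemma sum_Icc_sub_mul_le {F w : ℕ → ℝ} {L : ℕ} (hF : ∀ ℓ ∈ Icc 1 L, F ℓ ≤ F (ℓ + 1))
    (hw : ∀ ℓ ∈ Icc 1 L, w ℓ ≤ 1) :
    ∑ ℓ ∈ Icc 1 L, (F (ℓ + 1) - F ℓ) * w ℓ ≤ F (L + 1) - F 1 := by
  calc ∑ ℓ ∈ Icc 1 L, (F (ℓ + 1) - F ℓ) * w ℓ ≤ ∑ ℓ ∈ Icc 1 L, (F (ℓ + 1) - F ℓ) :=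
        sum_le_sum fun ℓ hℓ => mul_le_of_le_one_right (sub_nonneg.2 (hF ℓ hℓ)) (hw ℓ hℓ)
    _ = F (L + 1) - F 1 := by rw [← Ico_add_one_right_eq_Icc, sum_Ico_sub F (by omega)]

section Delta

variable {N L : ℕ} {ρ w δ δ' : ℕ → ℝ}

lemma memDelta.monotoneOn (hδ : memDelta L ρ δ) : MonotoneOn δ (Set.Icc 1 (L + 1)) :=
  monotoneOn_Icc_of_le_succ hδ.2.1

lemma memDelta.le_rbar (hδ : memDelta L ρ δ) {ℓ : ℕ} (h1 : 1 ≤ ℓ) (h2 : ℓ ≤ L + 1) :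
    δ ℓ ≤ rbar L ρ :=
  (hδ.monotoneOn ⟨h1, h2⟩ ⟨by omega, le_rfl⟩ h2).trans hδ.2.2

lemma memDelta_congr (h : ∀ ℓ, 1 ≤ ℓ → ℓ ≤ L + 1 → δ' ℓ = δ ℓ) :
    memDelta L ρ δ' ↔ memDelta L ρ δ := by
  unfold memDelta
  rw [h 1 le_rfl (by omega), h (L + 1) (by omega) le_rfl]
  refine and_congr_right' (and_congr_left' (forall_congr' fun ℓ => ?_))
  exact imp_congr_right fun h1 => imp_congr_right fun h2 => by
    rw [h ℓ h1 (by omega), h (ℓ + 1) (by omega) (by omega)]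

lemma memDelta_min {r : ℝ} (hδ : memDelta L ρ δ) (hr : 0 ≤ r) :
    memDelta L ρ fun ℓ => min (δ ℓ) r :=
  ⟨le_min hδ.1 hr, fun ℓ h1 h2 => min_le_min_right r (hδ.2.1 ℓ h1 h2),
    (min_le_left _ _).trans hδ.2.2⟩

lemma le_Tof {ℓ : ℕ} (h1 : 1 ≤ ℓ) (h2 : ℓ ≤ L + 1) (h : δ ℓ ≤ ρ ℓ) : ℓ ≤ Tof L ρ δ :=
  le_csSup ⟨L + 1, fun _ hx => hx.2.1⟩ ⟨h1, h2, h⟩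

lemma Tof_congr (h : ∀ ℓ, 1 ≤ ℓ → ℓ ≤ L + 1 → δ' ℓ = δ ℓ) : Tof L ρ δ' = Tof L ρ δ := by
  unfold Tof
  congr 1
  ext ℓ
  exact and_congr_right fun h1 => and_congr_right fun h2 => by rw [h ℓ h1 h2]

lemma lt_of_Tof_le_one (hT : Tof L ρ δ ≤ 1) {ℓ : ℕ} (h2 : 2 ≤ ℓ) (hL : ℓ ≤ L + 1) :
    ρ ℓ < δ ℓ :=
  lt_of_not_ge fun h => by have := le_Tof (by omega) hL h; omega

/-- The position attaining `r̄` always counts towards `T(δ)`, because `δ ≤ r̄`. -/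
lemma rbar_eq_of_Tof_le_one (hδ : memDelta L ρ δ) (hT : Tof L ρ δ ≤ 1) : rbar L ρ = ρ 1 := by
  obtain ⟨ℓ, hℓ, hρℓ⟩ := exists_mem_eq_sup' (nonempty_Icc.2 (by omega : 1 ≤ L + 1)) ρ
  rw [mem_Icc] at hℓ
  have : ℓ ≤ 1 := (le_Tof hℓ.1 hℓ.2 (hρℓ ▸ hδ.le_rbar hℓ.1 hℓ.2)).trans hT
  rw [rbar, hρℓ, show ℓ = 1 by omega]

lemma Jfun_eq_sum_max :
    Jfun L ρ w δ = δ (L + 1) + ∑ ℓ ∈ Icc 1 L, (max (ρ ℓ) (δ ℓ) - δ (ℓ + 1)) * w ℓ := by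
  unfold Jfun
  congr 1
  refine sum_congr rfl fun ℓ _ => ?_
  rw [← sub_self (δ ℓ), max_sub_sub_right, max_comm]
  ring

lemma Jfun_of_eqOn_zero (hw : ∀ ℓ ∈ Icc 1 L, w ℓ = 0) : Jfun L ρ w δ = δ (L + 1) := by
  rw [Jfun, sum_eq_zero fun ℓ hℓ => by rw [hw ℓ hℓ, mul_zero], add_zero]

lemma Jfun_le_Jfun_of_sub_monotone (hL : 1 ≤ L) (hρ1 : δ 1 ≤ ρ 1) (h1 : δ' 1 ≤ δ 1)
    (hρ : ∀ ℓ, 2 ≤ ℓ → ℓ ≤ L + 1 → ρ ℓ ≤ δ' ℓ)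
    (he : ∀ ℓ, 1 ≤ ℓ → ℓ ≤ L → δ ℓ - δ' ℓ ≤ δ (ℓ + 1) - δ' (ℓ + 1))
    (hw : ∀ ℓ ∈ Icc 1 L, w ℓ ≤ 1) : Jfun L ρ w δ' ≤ Jfun L ρ w δ := by
  set F : ℕ → ℝ := fun ℓ => max (ρ ℓ) (δ ℓ) - max (ρ ℓ) (δ' ℓ) with hF
  have hδ'δ : ∀ ℓ, 1 ≤ ℓ → ℓ ≤ L + 1 → δ' ℓ ≤ δ ℓ := fun ℓ hℓ1 hℓL => sub_nonneg.1 <|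
    (sub_nonneg.2 h1).trans (monotoneOn_Icc_of_le_succ he ⟨le_rfl, by omega⟩ ⟨hℓ1, hℓL⟩ hℓ1)
  have hF1 : F 1 = 0 := by
    simp only [hF, max_eq_left hρ1, max_eq_left (h1.trans hρ1), sub_self]
  have hFe : ∀ ℓ, 2 ≤ ℓ → ℓ ≤ L + 1 → F ℓ = δ ℓ - δ' ℓ := fun ℓ h2 hℓL => by
    simp only [hF, max_eq_right (hρ ℓ h2 hℓL),
      max_eq_right ((hρ ℓ h2 hℓL).trans (hδ'δ ℓ (by omega) hℓL))]
  have hFmono : ∀ ℓ ∈ Icc 1 L, F ℓ ≤ F (ℓ + 1) := by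
    intro ℓ hℓ
    rw [mem_Icc] at hℓ
    rw [hFe (ℓ + 1) (by omega) (by omega)]
    rcases hℓ.1.eq_or_lt with rfl | h2
    · rw [hF1, sub_nonneg]; exact hδ'δ 2 (by omega) (by omega)
    · rw [hFe ℓ h2 (by omega)]; exact he ℓ hℓ.1 hℓ.2
  have key : Jfun L ρ w δ - Jfun L ρ w δ' =
      F (L + 1) - ∑ ℓ ∈ Icc 1 L, (F (ℓ + 1) - F ℓ) * w ℓ := by
    rw [Jfun_eq_sum_max, Jfun_eq_sum_max, hFe (L + 1) (by omega) le_rfl, add_sub_add_comm,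
      ← sum_sub_distrib, sub_eq_add_neg _ (∑ ℓ ∈ Icc 1 L, _), ← sum_neg_distrib]
    refine congrArg _ (sum_congr rfl fun ℓ hℓ => ?_)
    rw [hFe (ℓ + 1) (by simp only [mem_Icc] at hℓ; omega) (by simp only [mem_Icc] at hℓ; omega)]
    ring
  linarith [sum_Icc_sub_mul_le hFmono hw]

section Truncation

variable {r : ℝ}

lemma one_lt_Tof_of_Tof_le_one (hδ : memDelta L ρ δ) (hT : Tof L ρ δ ≤ 1)
    (hmem : ∃ ℓ, 1 ≤ ℓ ∧ ℓ ≤ L + 1 ∧ ρ ℓ < rbar L ρ ∧ r = ρ ℓ)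
    (hδ' : ∀ ℓ, 1 ≤ ℓ → ℓ ≤ L + 1 → δ' ℓ = min (δ ℓ) r) : 1 < Tof L ρ δ' := by
  obtain ⟨ℓ, h1, h2, hlt, rfl⟩ := hmem
  have hℓ : ℓ ≠ 1 := by
    rintro rfl
    exact (rbar_eq_of_Tof_le_one hδ hT ▸ hlt).false
  exact (by omega : 1 < ℓ).trans_le (le_Tof h1 h2 (hδ' ℓ h1 h2 ▸ min_le_right _ _))

lemma dominatesDelta_of_Tof_le_one (hL : 1 ≤ L) (hLN : L ≤ N) (hδ : memDelta L ρ δ)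
    (hT : Tof L ρ δ ≤ 1) (hr : ∀ ℓ, 2 ≤ ℓ → ℓ ≤ L + 1 → ρ ℓ ≤ r)
    (hδ' : ∀ ℓ, 1 ≤ ℓ → ℓ ≤ L + 1 → δ' ℓ = min (δ ℓ) r)
    (hne : ∃ ℓ, 1 ≤ ℓ ∧ ℓ ≤ L + 1 ∧ δ' ℓ ≠ δ ℓ) : dominatesDelta N L ρ δ' δ := by
  have hρ1 : δ 1 ≤ ρ 1 := rbar_eq_of_Tof_le_one hδ hT ▸ hδ.le_rbar le_rfl (by omega)
  have sub_min_mono {a b : ℝ} (hab : a ≤ b) : a - min a r ≤ b - min b r := by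
    rw [← max_sub_sub_left, ← max_sub_sub_left, sub_self, sub_self]
    exact max_le_max le_rfl (sub_le_sub_right hab r)
  refine ⟨fun w hw => Jfun_le_Jfun_of_sub_monotone hL hρ1 ?_ ?_ ?_
    fun ℓ hℓ => (hw.1 ℓ (mem_Icc.1 hℓ).1 (by simp only [mem_Icc] at hℓ; omega)).2, ?_⟩
  · rw [hδ' 1 le_rfl (by omega)]
    exact min_le_left _ _
  · intro ℓ h2 hℓL
    rw [hδ' ℓ (by omega) hℓL]
    exact le_min (lt_of_Tof_le_one hT h2 hℓL).le (hr ℓ h2 hℓL)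
  · intro ℓ h1 h2
    rw [hδ' ℓ h1 (by omega), hδ' (ℓ + 1) (by omega) (by omega)]
    exact sub_min_mono (hδ.2.1 ℓ h1 h2)
  · refine ⟨fun ℓ => if ℓ = L + 1 then 1 else 0,
      ⟨fun ℓ _ _ => by dsimp only; split_ifs <;> norm_num, if_pos rfl⟩, ?_⟩
    have hw0 : ∀ ℓ ∈ Icc 1 L, (if ℓ = L + 1 then (1 : ℝ) else 0) = 0 := fun ℓ hℓ =>
      if_neg (by simp only [mem_Icc] at hℓ; omega)
    obtain ⟨ℓ, h1, h2, hℓ⟩ := hne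
    have hrδ : r < δ ℓ := by
      rw [hδ' ℓ h1 h2] at hℓ
      exact lt_of_not_ge fun h => hℓ (min_eq_left h)
    rw [Jfun_of_eqOn_zero hw0, Jfun_of_eqOn_zero hw0, hδ' (L + 1) (by omega) le_rfl]
    exact min_lt_of_right_lt (hrδ.trans_le (hδ.monotoneOn ⟨h1, h2⟩ ⟨by omega, le_rfl⟩ h2))

end Truncation

end Delta

theorem stmt16_general
    (N L : ℕ) (hL1 : 1 ≤ L) (hLN : L ≤ N)
    (ρ : ℕ → ℝ)
    (hρ0 : ρ (L + 1) = 0)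
    (δ : ℕ → ℝ) (hδ : memDelta L ρ δ)
    (rbar' : ℝ)
    (hub : ∀ ℓ, 1 ≤ ℓ → ℓ ≤ L + 1 → ρ ℓ < rbar L ρ → ρ ℓ ≤ rbar')
    (hmem : ∃ ℓ, 1 ≤ ℓ ∧ ℓ ≤ L + 1 ∧ ρ ℓ < rbar L ρ ∧ rbar' = ρ ℓ)
    (δ' : ℕ → ℝ)
    (hcase1 : 1 < Tof L ρ δ → ∀ ℓ, 1 ≤ ℓ → ℓ ≤ L + 1 → δ' ℓ = δ ℓ)
    (hcase2 : ¬ 1 < Tof L ρ δ → ∀ ℓ, 1 ≤ ℓ → ℓ ≤ L + 1 → δ' ℓ = min (δ ℓ) rbar') :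
    memDelta L ρ δ' ∧ P1 L ρ δ' ∧
      ((∃ ℓ, 1 ≤ ℓ ∧ ℓ ≤ L + 1 ∧ δ' ℓ ≠ δ ℓ) → dominatesDelta N L ρ δ' δ) := by
  by_cases hT : 1 < Tof L ρ δ
  · have hδ'δ := hcase1 hT
    exact ⟨(memDelta_congr hδ'δ).2 hδ, by rwa [P1, Tof_congr hδ'δ],
      fun ⟨ℓ, h1, h2, hne⟩ => absurd (hδ'δ ℓ h1 h2) hne⟩
  · have hT1 : Tof L ρ δ ≤ 1 := not_lt.1 hT
    have hδ' := hcase2 hT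
    have hr : ∀ ℓ, 2 ≤ ℓ → ℓ ≤ L + 1 → ρ ℓ ≤ rbar' := fun ℓ h2 hℓL =>
      hub ℓ (by omega) hℓL ((lt_of_Tof_le_one hT1 h2 hℓL).trans_le (hδ.le_rbar (by omega) hℓL))
    have hr0 : 0 ≤ rbar' := hρ0 ▸ hr (L + 1) (by omega) le_rfl
    exact ⟨(memDelta_congr hδ').2 (memDelta_min hδ hr0), one_lt_Tof_of_Tof_le_one hδ hT1 hmem hδ',
      dominatesDelta_of_Tof_le_one hL1 hLN hδ hT1 hr hδ'⟩

theorem stmt16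
    (N L : ℕ) (hL1 : 1 ≤ L) (hLN : L ≤ N)
    (ρ : ℕ → ℝ)
    (hρpos : ∀ ℓ, 1 ≤ ℓ → ℓ ≤ N + 1 → ℓ ≠ L + 1 → 0 < ρ ℓ)
    (hρ0 : ρ (L + 1) = 0)
    (δ : ℕ → ℝ) (hδ : memDelta L ρ δ)
    (rbar' : ℝ)
    (hub : ∀ ℓ, 1 ≤ ℓ → ℓ ≤ L + 1 → ρ ℓ < rbar L ρ → ρ ℓ ≤ rbar')
    (hmem : ∃ ℓ, 1 ≤ ℓ ∧ ℓ ≤ L + 1 ∧ ρ ℓ < rbar L ρ ∧ rbar' = ρ ℓ)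
    (δ' : ℕ → ℝ)
    (hcase1 : 1 < Tof L ρ δ → ∀ ℓ, 1 ≤ ℓ → ℓ ≤ L + 1 → δ' ℓ = δ ℓ)
    (hcase2 : ¬ 1 < Tof L ρ δ → ∀ ℓ, 1 ≤ ℓ → ℓ ≤ L + 1 → δ' ℓ = min (δ ℓ) rbar') :
    memDelta L ρ δ' ∧ P1 L ρ δ' ∧
      ((∃ ℓ, 1 ≤ ℓ ∧ ℓ ≤ L + 1 ∧ δ' ℓ ≠ δ ℓ) → dominatesDelta N L ρ δ' δ) :=
  stmt16_general N L hL1 hLN ρ hρ0 δ hδ rbar' hub hmem δ' hcase1 hcase2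
end
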